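/- For any n ≥ m ≥ 0 with L(n−m)∘ϑ^m > 0 (i.e., n−m is not a weak ascending ladder epoch of the walk reversed at n), the most recent common ancestor satisfies mrca(m,n) = n − T(T^{−1}(n−m))∘ϑ^n = m − τ_{L(n−m)}∘ϑ^m, where T^{−1}(j) = min{k ≥ 0 : T(k) ≥ j} and τ_ℓ = inf{k > 0 : S(k) ≥ ℓ}. -/

import Mathlib

open scoped Classical NNReal
noncomputable section

/-- Finite point measures on `(0,∞)`, modeled as multisets of atoms in `ℝ≥0`. -/
abbrev PtM := Multiset ℝ≥0

/-- A stick: a life-length together with a finite point measure of birth times. -/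
abbrev Stick := ℝ≥0 × PtM

/-- The space of doubly infinite sequences of sticks. -/
abbrev Om := ℤ → Stick

/-- The shift operator `θ_n`. -/
def theta (n : ℤ) (ω : Om) : Om := fun k => ω (n + k)

/-- The dual (time-reversal) operator `ϑ^n`. -/
def dual (n : ℤ) (ω : Om) : Om := fun k => ω (n - k - 1)

/-- Life length of the `k`-th individual. -/
def Vc (ω : Om) (k : ℤ) : ℝ≥0 := (ω k).1

/-- Point measure (ages at childbearing) of the `k`-th individual. -/
def Pc (ω : Om) (k : ℤ) : PtM := (ω k).2

/-- The Lukasiewicz path `S`. -/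
def Sw (ω : Om) (n : ℤ) : ℤ :=
  if 0 ≤ n then ∑ k ∈ Finset.range n.toNat, ((Multiset.card (Pc ω (k : ℤ)) : ℤ) - 1)
  else - ∑ k ∈ Finset.range (-n).toNat, ((Multiset.card (Pc ω (-(k : ℤ) - 1)) : ℤ) - 1)

/-- `π(ν)`: the supremum of the support (largest atom) of a finite point measure. -/
def piM (ν : PtM) : ℝ≥0 := ν.sup

/-- `Υ_j(ν)`: removes the `j` largest atoms of `ν`. -/
def upsilon (j : ℕ) (ν : PtM) : PtM :=
  ((ν.sort (· ≤ ·)).take (Multiset.card ν - j) : List ℝ≥0)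

/-- The map `Φ` driving the spine process dynamics. -/
def phiSp (Y : List PtM) (ν : PtM) : List PtM :=
  if ν = 0 then
    match Y.reverse.dropWhile (fun m => decide (Multiset.card m < 2)) with
    | [] => []
    | h :: t => (upsilon 1 h :: t).reverse
  else Y ++ [ν]

/-- The spine process `𝕊₀ⁿ`. -/
def spine (ω : Om) : ℕ → List PtM
  | 0 => []
  | n + 1 => phiSp (spine ω n) (Pc ω (n : ℤ))

/-- `π` extended to finite sequences of point measures. -/
def piL (Y : List PtM) : ℝ≥0 := (Y.map piM).sum

/-- The chronological height process `ℍ(n) = π(𝕊₀ⁿ)`. -/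
def Hchr (ω : Om) (n : ℕ) : ℝ≥0 := piL (spine ω n)

/-- The genealogical height process
`𝓗(n) = #{k ∈ {0,…,n−1} : S(k+1) ≤ min_{k+1 ≤ j ≤ n} S(j)}`. -/
def genH (ω : Om) (n : ℕ) : ℕ :=
  ((Finset.range n).filter
    (fun k : ℕ => ∀ j : ℕ, j ∈ Finset.Icc (k + 1) n → Sw ω ((k : ℤ) + 1) ≤ Sw ω (j : ℤ))).card

/-- Weak ascending ladder height times `T(k)` (valued `⊤` if nonexistent). -/
def ladderT (ω : Om) : ℕ → ℕ∞
  | 0 => 0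
  | k + 1 => sInf {x : ℕ∞ | ∃ m j : ℕ, x = (m : ℕ∞) ∧ ladderT ω k = (j : ℕ∞) ∧
      j < m ∧ Sw ω (j : ℤ) ≤ Sw ω (m : ℤ)}

/-- `T^{-1}(n) = min{k ≥ 0 : T(k) ≥ n}`. -/
def Tinv (ω : Om) (n : ℕ) : ℕ := sInf {k : ℕ | (n : ℕ∞) ≤ ladderT ω k}

/-- `T̃^{-1}(n) = max{k ≥ 0 : T(k) ≤ n}`. -/
def tildeTinv (ω : Om) (n : ℕ) : ℕ := sSup {k : ℕ | ladderT ω k ≤ (n : ℕ∞)}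

/-- First passage time upward `τ_ℓ = inf{k > 0 : S(k) ≥ ℓ}`. -/
def tauUp (ω : Om) (ℓ : ℤ) : ℕ∞ :=
  sInf {x : ℕ∞ | ∃ k : ℕ, x = (k : ℕ∞) ∧ 0 < k ∧ ℓ ≤ Sw ω (k : ℤ)}

/-- First hitting time downward `τ⁻_ℓ = inf{k ≥ 0 : S(k) = −ℓ}`. -/
def tauDown (ω : Om) (ℓ : ℤ) : ℕ∞ :=
  sInf {x : ℕ∞ | ∃ k : ℕ, x = (k : ℕ∞) ∧ Sw ω (k : ℤ) = -ℓ}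

/-- `τ_ℓ` as a natural number (junk value `0` when infinite). -/
def tauUpN (ω : Om) (ℓ : ℤ) : ℕ := (tauUp ω ℓ).toNat

/-- The undershoot `ζ_ℓ = ℓ − S(τ_ℓ − 1)`. -/
def zetaU (ω : Om) (ℓ : ℤ) : ℤ := ℓ - Sw ω ((tauUpN ω ℓ : ℤ) - 1)

/-- `μ_ℓ = Υ_{ζ_ℓ}(𝒫_{τ_ℓ − 1})`. -/
def muU (ω : Om) (ℓ : ℤ) : PtM := upsilon (zetaU ω ℓ).toNat (Pc ω ((tauUpN ω ℓ : ℤ) - 1))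

/-- `𝒬(k) = μ₀ ∘ θ_{T(k−1)}`. -/
def Qcal (ω : Om) (k : ℕ) : PtM := muU (theta ((ladderT ω (k - 1)).toNat : ℤ) ω) 0

/-- `𝕐(k) = π(𝒬(k))`. -/
def Ybb (ω : Om) (k : ℕ) : ℝ≥0 := piM (Qcal ω k)

/-- The backward maximum `L(m) = max_{0 ≤ k ≤ m} S(−k)`. -/
def Lmax (ω : Om) (m : ℕ) : ℤ :=
  Finset.sup' (Finset.range (m + 1)) Finset.nonempty_range_add_one (fun k => Sw ω (-(k : ℤ)))

/-- The ancestor set `𝒜(n) = {n − T(k)∘ϑ^n : k ≥ 0}` (only finite ladder times). -/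
def Aset (ω : Om) (n : ℕ) : Set ℤ :=
  {a | ∃ k j : ℕ, ladderT (dual (n : ℤ) ω) k = (j : ℕ∞) ∧ a = (n : ℤ) - (j : ℤ)}

/-- `mrca(m,n) = max(𝒜(m) ∩ 𝒜(n))`. -/
def mrcaZ (ω : Om) (m n : ℕ) : ℤ := sSup (Aset ω m ∩ Aset ω n)

/-- `χ(m,k) = inf{j ≥ m+1 : S(j) = S(m+1) − k}`. -/
def chiT (ω : Om) (m k : ℕ) : ℕ∞ :=
  sInf {x : ℕ∞ | ∃ j : ℕ, x = (j : ℕ∞) ∧ m + 1 ≤ j ∧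
    Sw ω (j : ℤ) = Sw ω ((m : ℤ) + 1) - (k : ℤ)}

/-- `χ(m) = inf{j ≥ m+1 : S(j) = S(m) − 1}`. -/
def chiF (ω : Om) (m : ℕ) : ℕ∞ :=
  sInf {x : ℕ∞ | ∃ j : ℕ, x = (j : ℕ∞) ∧ m + 1 ≤ j ∧ Sw ω (j : ℤ) = Sw ω (m : ℤ) - 1}

/-- The functional `D_ℓ(𝕊₀^m)` of the spine, expressed through the dual walk:
`D_ℓ = (Σ_{i : 0 < T(i) ≤ min(τ_ℓ, m)} 𝕐(i) − 1_{τ_ℓ ≤ m} π(μ_ℓ)) ∘ ϑ^m`, with `D_0 ≡ 0`. -/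
def Dfun (ω : Om) (m : ℕ) (ℓ : ℤ) : ℝ :=
  if ℓ < 1 then 0 else
    (∑ i ∈ (Finset.Icc 1 m).filter
        (fun i => 0 < ladderT (dual (m : ℤ) ω) i ∧
          ladderT (dual (m : ℤ) ω) i ≤ min (tauUp (dual (m : ℤ) ω) ℓ) (m : ℕ∞)),
      (Ybb (dual (m : ℤ) ω) i : ℝ))
    - (if tauUp (dual (m : ℤ) ω) ℓ ≤ (m : ℕ∞) then (piM (muU (dual (m : ℤ) ω) ℓ) : ℝ) else 0)

/-- `K_j = 2𝒱(j−1) − ℍ(j)`. -/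
def Kt (ω : Om) (j : ℕ) : ℝ := 2 * ∑ k ∈ Finset.range j, (Vc ω (k : ℤ) : ℝ) - (Hchr ω j : ℝ)

/-- The chronological contour process: on `[K_n, K_{n+1}]` it increases at rate `+1` from
`ℍ(n)` up to `ℍ(n) + V_n` and then decreases at rate `−1` down to `ℍ(n+1)`. -/
def contour (ω : Om) (t : ℝ) : ℝ :=
  let n := sSup {j : ℕ | Kt ω j ≤ t}
  min ((Hchr ω n : ℝ) + (t - Kt ω n)) ((Hchr ω (n + 1) : ℝ) + (Kt ω (n + 1) - t))

/-!
For `a ≤ n`, `n − a` is a weak ladder epoch of `S ∘ ϑ^n` exactly when `S(a) ≤ S(p)` for all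
`p ∈ [a, n]`, since `S ∘ ϑ^n (j) = S(n) − S(n − j)`. Hence for `m ≤ n` the common ancestors of
`m` and `n` are the points of `𝒜(n)` not exceeding `m`. The largest of them is `n` minus the first
ladder epoch of `S ∘ ϑ^n` that is at least `n − m`; it is also the last time before `m` at which
`S` drops to `min_{[m,n]} S = S(m) − L(n−m) ∘ ϑ^m`, that is `m − τ_L ∘ ϑ^m`. As
`L(n−m) ∘ ϑ^m > 0`, that minimum lies strictly below `S(m)`, so `m` itself is not a common ancestor.
-/

open Set

lemma isLeast_of_sInf_natCast_eq {P : ℕ → Prop} {b : ℕ}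
    (h : sInf {x : ℕ∞ | ∃ k : ℕ, x = k ∧ P k} = b) : IsLeast {k | P k} b := by
  have hne : {x : ℕ∞ | ∃ k : ℕ, x = k ∧ P k}.Nonempty := by
    by_contra hempty
    rw [not_nonempty_iff_eq_empty.mp hempty, sInf_empty] at h
    exact ENat.top_ne_natCast b h
  obtain ⟨k, hk, hPk⟩ := h ▸ csInf_mem hne
  refine ⟨Nat.cast_injective hk ▸ hPk, fun m hm => ?_⟩
  have : (b : ℕ∞) ≤ m := h ▸ sInf_le ⟨m, rfl, hm⟩
  exact_mod_cast this

section Walk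

lemma Sw_natCast (ω : Om) (q : ℕ) :
    Sw ω q = ∑ k ∈ Finset.range q, ((Multiset.card (Pc ω k) : ℤ) - 1) := by
  simp [Sw]

lemma Sw_neg_natCast (ω : Om) (q : ℕ) :
    Sw ω (-q) = -∑ k ∈ Finset.range q, ((Multiset.card (Pc ω (-(k : ℤ) - 1)) : ℤ) - 1) := by
  rcases Nat.eq_zero_or_pos q with rfl | hq
  · simp [Sw]
  · rw [Sw, if_neg (by omega)]
    simp

lemma Sw_add_one (ω : Om) (p : ℤ) :
    Sw ω (p + 1) = Sw ω p + ((Multiset.card (Pc ω p) : ℤ) - 1) := by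
  rcases le_or_gt 0 p with hp | hp
  · lift p to ℕ using hp
    rw [show (p : ℤ) + 1 = (p + 1 : ℕ) by push_cast; ring, Sw_natCast, Sw_natCast,
      Finset.sum_range_succ]
  · obtain ⟨q, rfl⟩ : ∃ q : ℕ, p = -(q + 1 : ℕ) := ⟨(-p - 1).toNat, by omega⟩
    rw [show -((q + 1 : ℕ) : ℤ) + 1 = -(q : ℤ) by push_cast; ring, Sw_neg_natCast,
      Sw_neg_natCast, Finset.sum_range_succ]
    push_cast
    ring_nf

lemma Sw_dual (ω : Om) (N z : ℤ) : Sw (dual N ω) z = Sw ω N - Sw ω (N - z) := by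
  have hstep : ∀ i : ℤ, Sw (dual N ω) (i + 1) - Sw (dual N ω) i
      = Sw ω (N - i) - Sw ω (N - (i + 1)) := fun i => by
    have h := Sw_add_one ω (N - (i + 1))
    rw [show N - (i + 1) + 1 = N - i by ring] at h
    rw [Sw_add_one, h, show Pc (dual N ω) i = Pc ω (N - (i + 1)) from
      congrArg Prod.snd (congrArg ω (by ring))]
    ring
  induction z using Int.induction_on with
  | zero => simp [Sw]
  | succ i ih => linarith [hstep i]
  | pred i ih =>
    have h := hstep (-i - 1)
    rw [show -(i : ℤ) - 1 + 1 = -i by ring] at h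
    linarith

lemma isLeast_Lmax_dual (ω : Om) (N : ℤ) (d : ℕ) :
    IsLeast (Sw ω '' Icc N (N + d)) (Sw ω N - Lmax (dual N ω) d) := by
  obtain ⟨k, hk, hmax⟩ := Finset.exists_mem_eq_sup' (Finset.nonempty_range_add_one (n := d))
    (fun k : ℕ => Sw (dual N ω) (-(k : ℤ)))
  rw [Finset.mem_range] at hk
  refine ⟨⟨N + (k : ℤ), mem_Icc.mpr ⟨by omega, by omega⟩, ?_⟩, ?_⟩
  · rw [Lmax, hmax, Sw_dual]
    ring_nf
  rintro _ ⟨p, ⟨hNp, hpd⟩, rfl⟩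
  have hle := Finset.le_sup' (fun k : ℕ => Sw (dual N ω) (-(k : ℤ)))
    (Finset.mem_range.mpr (show (p - N).toNat < d + 1 by omega))
  rw [Sw_dual, show N - -(((p - N).toNat : ℕ) : ℤ) = p by omega] at hle
  rw [Lmax]
  omega

lemma isGreatest_of_tauUp_dual {ω : Om} {N ℓ : ℤ} {b : ℕ} (hb : tauUp (dual N ω) ℓ = b) :
    IsGreatest {q | q < N ∧ Sw ω q ≤ Sw ω N - ℓ} (N - b) := by
  obtain ⟨⟨hb0, hbS⟩, hmin⟩ := isLeast_of_sInf_natCast_eq hb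
  rw [Sw_dual] at hbS
  refine ⟨⟨by omega, by omega⟩, fun q ⟨hqN, hq⟩ => ?_⟩
  have := @hmin (N - q).toNat ⟨by omega, by
    rw [Sw_dual, show N - ((N - q).toNat : ℕ) = q by omega]
    omega⟩
  omega

end Walk

section Ladder

variable {ω : Om}

def IsWeakRecord (ω : Om) (j : ℕ) : Prop := ∀ i ≤ j, Sw ω i ≤ Sw ω j

lemma ladderT_succ_of_eq {k j : ℕ} (hk : ladderT ω k = j) :
    ladderT ω (k + 1) = sInf {x : ℕ∞ | ∃ m : ℕ, x = m ∧ j < m ∧ Sw ω j ≤ Sw ω m} := by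
  rw [ladderT]
  simp [hk]

lemma add_one_le_ladderT_succ (ω : Om) (k : ℕ) : ladderT ω k + 1 ≤ ladderT ω (k + 1) := by
  refine le_sInf ?_
  rintro _ ⟨m, j, rfl, hj, hjm, -⟩
  rw [hj]
  exact_mod_cast hjm

lemma ladderT_mono (ω : Om) : Monotone (ladderT ω) :=
  monotone_nat_of_le_succ fun k => le_self_add.trans (add_one_le_ladderT_succ ω k)

lemma le_ladderT (ω : Om) (k : ℕ) : (k : ℕ∞) ≤ ladderT ω k := by
  induction k with
  | zero => simp
  | succ k ih =>
    calc ((k + 1 : ℕ) : ℕ∞) = k + 1 := by push_cast; rfl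
      _ ≤ ladderT ω k + 1 := by gcongr
      _ ≤ ladderT ω (k + 1) := add_one_le_ladderT_succ ω k

lemma isWeakRecord_of_ladderT_eq {k j : ℕ} (h : ladderT ω k = j) : IsWeakRecord ω j := by
  induction k generalizing j with
  | zero =>
    obtain rfl : j = 0 := by simpa [ladderT] using h.symm
    intro i hi
    rw [Nat.le_zero.mp hi]
  | succ k ih =>
    have hfin : ladderT ω k ≠ ⊤ := fun htop => by
      simpa [htop, h] using add_one_le_ladderT_succ ω k
    obtain ⟨t, ht⟩ := ENat.ne_top_iff_exists.mp hfin
    replace ht := ht.symm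
    obtain ⟨⟨htj, hSt⟩, hleast⟩ := isLeast_of_sInf_natCast_eq (ladderT_succ_of_eq ht ▸ h)
    intro i hi
    rcases le_or_gt i t with hit | hti
    · exact (ih ht i hit).trans hSt
    rcases hi.eq_or_lt with rfl | hij
    · rfl
    have : ¬ Sw ω t ≤ Sw ω i := fun hSi => (hleast ⟨hti, hSi⟩).not_gt hij
    omega

lemma exists_ladderT_eq_of_isWeakRecord {j : ℕ} (h : IsWeakRecord ω j) :
    ∃ k, ladderT ω k = j := by
  set k := Nat.findGreatest (fun k => ladderT ω k ≤ j) j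
  have hk : ladderT ω k ≤ j :=
    Nat.findGreatest_spec (P := fun k => ladderT ω k ≤ j) (Nat.zero_le j) (by simp [ladderT])
  obtain ⟨t, ht⟩ := ENat.ne_top_iff_exists.mp (ne_top_of_le_ne_top (ENat.natCast_ne_top j) hk)
  refine ⟨k, ?_⟩
  by_contra hne
  have htj : t < j := by
    rw [← ht] at hne hk
    exact_mod_cast lt_of_le_of_ne hk hne
  have hsucc : ladderT ω (k + 1) ≤ j :=
    ladderT_succ_of_eq ht.symm ▸ sInf_le ⟨j, rfl, htj, h t htj.le⟩
  have hkj : k + 1 ≤ j := by exact_mod_cast (le_ladderT ω (k + 1)).trans hsucc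
  exact Nat.findGreatest_is_greatest (Nat.lt_succ_self k) hkj hsucc

end Ladder

section Ancestors

variable {ω : Om}

lemma mem_Aset_iff {N : ℕ} {a : ℤ} :
    a ∈ Aset ω N ↔ a ≤ N ∧ ∀ p, a ≤ p → p ≤ N → Sw ω a ≤ Sw ω p := by
  constructor
  · rintro ⟨k, j, hk, rfl⟩
    refine ⟨by omega, fun p hap hpN => ?_⟩
    have h := isWeakRecord_of_ladderT_eq hk (N - p).toNat (by omega)
    rw [Sw_dual, Sw_dual, show (N : ℤ) - ((N - p).toNat : ℕ) = p by omega] at h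
    omega
  · rintro ⟨haN, h⟩
    obtain ⟨k, hk⟩ := exists_ladderT_eq_of_isWeakRecord (ω := dual N ω) (j := (N - a).toNat)
      fun i hi => by
        have := h (N - i) (by omega) (by omega)
        rw [Sw_dual, Sw_dual, show (N : ℤ) - ((N - a).toNat : ℕ) = a by omega]
        omega
    exact ⟨k, _, hk, by omega⟩

lemma Aset_inter_eq {m n : ℕ} (hmn : m ≤ n) :
    Aset ω m ∩ Aset ω n = Aset ω n ∩ Iic (m : ℤ) := by
  ext a
  simp only [mem_inter_iff, mem_Iic, mem_Aset_iff]
  constructor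
  · rintro ⟨⟨ham, -⟩, hn⟩
    exact ⟨hn, ham⟩
  · rintro ⟨⟨han, hn⟩, ham⟩
    exact ⟨⟨ham, fun p hap hpm => hn p hap (by omega)⟩, han, hn⟩

lemma isGreatest_Aset_inter_Iic_of_ladderT_Tinv {m n a : ℕ}
    (ha : ladderT (dual n ω) (Tinv (dual n ω) (n - m)) = a) :
    IsGreatest (Aset ω n ∩ Iic (m : ℤ)) (n - a) := by
  have hna : n - m ≤ a := by
    have h : ((n - m : ℕ) : ℕ∞) ≤ ladderT (dual n ω) (Tinv (dual n ω) (n - m)) :=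
      Nat.sInf_mem (s := {k | ((n - m : ℕ) : ℕ∞) ≤ ladderT (dual n ω) k}) ⟨n - m, le_ladderT _ _⟩
    exact_mod_cast ha ▸ h
  refine ⟨⟨⟨_, a, ha, rfl⟩, by simp only [mem_Iic]; omega⟩, ?_⟩
  rintro x ⟨⟨k, j, hk, rfl⟩, hxm⟩
  rw [mem_Iic] at hxm
  have hTk : Tinv (dual n ω) (n - m) ≤ k := Nat.sInf_le <| show ((n - m : ℕ) : ℕ∞) ≤ _ by
    rw [hk]
    exact_mod_cast (show n - m ≤ j by omega)
  have haj : (a : ℕ∞) ≤ j := ha ▸ hk ▸ ladderT_mono _ hTk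
  have : a ≤ j := by exact_mod_cast haj
  omega

lemma isGreatest_Aset_inter_Iic {n : ℕ} {M μ p : ℤ} (hμ : IsLeast (Sw ω '' Icc M n) μ)
    (hμM : μ < Sw ω M) (hp : IsGreatest {q | q < M ∧ Sw ω q ≤ μ} p) :
    IsGreatest (Aset ω n ∩ Iic M) p := by
  obtain ⟨⟨hpM, hpμ⟩, hpmax⟩ := hp
  obtain ⟨⟨q₀, ⟨hq₀M, hq₀n⟩, rfl⟩, hμle⟩ := hμ
  refine ⟨⟨mem_Aset_iff.mpr ⟨by omega, fun q hpq hqn => ?_⟩, hpM.le⟩, ?_⟩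
  · rcases lt_or_ge q M with hqM | hMq
    · rcases hpq.eq_or_lt with rfl | hpq
      · rfl
      have : ¬ Sw ω q ≤ Sw ω q₀ := fun h => (hpmax ⟨hqM, h⟩).not_gt hpq
      omega
    · exact hpμ.trans (hμle ⟨q, ⟨hMq, hqn⟩, rfl⟩)
  · rintro x ⟨hxn, hxM⟩
    have hxμ : Sw ω x ≤ Sw ω q₀ := (mem_Aset_iff.mp hxn).2 q₀ (hxM.trans hq₀M) hq₀n
    have hxM' : x < M := lt_of_le_of_ne hxM (by rintro rfl; omega)
    exact hpmax ⟨hxM', hxμ⟩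

end Ancestors

theorem stmt8 (ω : Om) (m n : ℕ) (hmn : m ≤ n)
    (hL : 0 < Lmax (dual (m : ℤ) ω) (n - m)) (a b : ℕ)
    (ha : ladderT (dual (n : ℤ) ω) (Tinv (dual (n : ℤ) ω) (n - m)) = (a : ℕ∞))
    (hb : tauUp (dual (m : ℤ) ω) (Lmax (dual (m : ℤ) ω) (n - m)) = (b : ℕ∞)) :
    mrcaZ ω m n = (n : ℤ) - (a : ℤ) ∧ mrcaZ ω m n = (m : ℤ) - (b : ℤ) := by
  have hmin := isLeast_Lmax_dual ω m (n - m)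
  rw [show (m : ℤ) + ((n - m : ℕ) : ℤ) = n by omega] at hmin
  have hmb : IsGreatest (Aset ω n ∩ Iic (m : ℤ)) (m - b) :=
    isGreatest_Aset_inter_Iic hmin (by omega) (isGreatest_of_tauUp_dual hb)
  rw [mrcaZ, Aset_inter_eq hmn, hmb.csSup_eq]
  exact ⟨hmb.unique (isGreatest_Aset_inter_Iic_of_ladderT_Tinv ha), rfl⟩

end
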